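/- arXiv:1412.0122 — 5 statements merged into one kernel-verified Lean document; each statement's English description precedes it below -/
import Mathlib

section
/- If Y = Y₁ - Y₂ where Y₁, Y₂ are nonzero effective divisors (nonnegative integer combinations of basis vectors, not both zero at once) without common components on a negative definite intersection lattice in which every nonzero effective divisor Y' satisfies (Y'·Y') ≤ -2, then (Y·Y) ≤ -4. Consequently, any divisor Y with (Y·Y) = -2 or (Y·Y) = -3 is either effective or anti-effective. -/
/-!
Write `Y = Y₁ - Y₂`. Then `(Y·Y) = (Y₁·Y₁) + (Y₂·Y₂) - (Y₁·Y₂) - (Y₂·Y₁)`; both squares are at most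
`-2` by the rationality condition, and the cross terms are nonnegative because `Y₁` and `Y₂` share
no component, so only off-diagonal entries of the form contribute to them. For the consequence,
a divisor that is neither effective nor anti-effective is the difference of its positive and
negative parts, both nonzero.
-/

open Finset

/-- The quadratic/bilinear value `(Y · Y')` of the intersection form given by matrix `M`. -/
def interForm (n : ℕ) (M : Fin n → Fin n → ℤ) (Y Y' : Fin n → ℤ) : ℤ :=
  ∑ i, ∑ j, Y i * M i j * Y' j

variable {n : ℕ} {M : Fin n → Fin n → ℤ}

lemma interForm_sub_sub (A B : Fin n → ℤ) :
    interForm n M (A - B) (A - B) =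
      interForm n M A A - interForm n M A B - interForm n M B A + interForm n M B B := by
  simp only [interForm, Pi.sub_apply, ← sum_sub_distrib, ← sum_add_distrib]
  refine sum_congr rfl fun i _ => sum_congr rfl fun j _ => ?_
  ring

lemma interForm_nonneg_of_disjoint (hoff : ∀ i j, i ≠ j → 0 ≤ M i j) {A B : Fin n → ℤ}
    (hA : ∀ i, 0 ≤ A i) (hB : ∀ i, 0 ≤ B i) (hdisj : ∀ i, A i = 0 ∨ B i = 0) :
    0 ≤ interForm n M A B := by
  refine sum_nonneg fun i _ => sum_nonneg fun j _ => ?_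
  rcases eq_or_ne i j with rfl | hij
  · rcases hdisj i with h | h <;> simp [h]
  · exact mul_nonneg (mul_nonneg (hA i) (hoff i j hij)) (hB j)

lemma interForm_sub_le_neg_four (hoff : ∀ i j, i ≠ j → 0 ≤ M i j)
    (hrat : ∀ Y : Fin n → ℤ, (∀ i, 0 ≤ Y i) → Y ≠ 0 → interForm n M Y Y ≤ -2)
    {Y₁ Y₂ : Fin n → ℤ} (h₁ : ∀ i, 0 ≤ Y₁ i) (h₂ : ∀ i, 0 ≤ Y₂ i) (hY₁ : Y₁ ≠ 0) (hY₂ : Y₂ ≠ 0)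
    (hdisj : ∀ i, Y₁ i = 0 ∨ Y₂ i = 0) :
    interForm n M (Y₁ - Y₂) (Y₁ - Y₂) ≤ -4 := by
  have h₁₂ := interForm_nonneg_of_disjoint hoff h₁ h₂ hdisj
  have h₂₁ := interForm_nonneg_of_disjoint hoff h₂ h₁ fun i => (hdisj i).symm
  have := hrat Y₁ h₁ hY₁
  have := hrat Y₂ h₂ hY₂
  rw [interForm_sub_sub]
  omega

lemma nonneg_or_nonpos_of_neg_four_lt_interForm (hoff : ∀ i j, i ≠ j → 0 ≤ M i j)
    (hrat : ∀ Y : Fin n → ℤ, (∀ i, 0 ≤ Y i) → Y ≠ 0 → interForm n M Y Y ≤ -2)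
    {Y : Fin n → ℤ} (hY : -4 < interForm n M Y Y) :
    (∀ i, 0 ≤ Y i) ∨ ∀ i, Y i ≤ 0 := by
  by_contra! ⟨⟨i, hi⟩, ⟨j, hj⟩⟩
  have hpos : Y⁺ ≠ 0 := fun h => hj.not_ge (by simpa using congrFun h j)
  have hneg : Y⁻ ≠ 0 := fun h => hi.not_ge (by simpa using congrFun h i)
  have hdisj (k : Fin n) : Y⁺ k = 0 ∨ Y⁻ k = 0 := by
    simp only [Pi.posPart_apply, Pi.negPart_apply, posPart_eq_zero, negPart_eq_zero]
    exact le_total _ _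
  have := interForm_sub_le_neg_four (Y₁ := Y⁺) (Y₂ := Y⁻) hoff hrat
    (fun k => posPart_nonneg (Y k)) (fun k => negPart_nonneg (Y k)) hpos hneg hdisj
  rw [posPart_sub_negPart] at this
  omega

theorem stmt_0_general (n : ℕ) (M : Fin n → Fin n → ℤ)
    (hoff : ∀ i j, i ≠ j → 0 ≤ M i j)
    (hrat : ∀ Y' : Fin n → ℤ, (∀ i, 0 ≤ Y' i) → Y' ≠ 0 → interForm n M Y' Y' ≤ -2) :
    (∀ Y₁ Y₂ : Fin n → ℤ, (∀ i, 0 ≤ Y₁ i) → (∀ i, 0 ≤ Y₂ i) → Y₁ ≠ 0 → Y₂ ≠ 0 →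
      (∀ i, Y₁ i = 0 ∨ Y₂ i = 0) →
      interForm n M (Y₁ - Y₂) (Y₁ - Y₂) ≤ -4) ∧
    (∀ Y : Fin n → ℤ, (interForm n M Y Y = -2 ∨ interForm n M Y Y = -3) →
      (∀ i, 0 ≤ Y i) ∨ (∀ i, Y i ≤ 0)) :=
  ⟨fun _ _ => interForm_sub_le_neg_four hoff hrat,
    fun _ hY => nonneg_or_nonpos_of_neg_four_lt_interForm hoff hrat (by omega)⟩

theorem stmt_0 (n : ℕ) (M : Fin n → Fin n → ℤ)
    (hsymm : ∀ i j, M i j = M j i)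
    (hdiag : ∀ i, M i i ≤ -2)
    (hoff : ∀ i j, i ≠ j → 0 ≤ M i j)
    (hnegdef : ∀ x : Fin n → ℤ, x ≠ 0 → interForm n M x x < 0)
    (hrat : ∀ Y' : Fin n → ℤ, (∀ i, 0 ≤ Y' i) → Y' ≠ 0 → interForm n M Y' Y' ≤ -2) :
    (∀ Y₁ Y₂ : Fin n → ℤ, (∀ i, 0 ≤ Y₁ i) → (∀ i, 0 ≤ Y₂ i) → Y₁ ≠ 0 → Y₂ ≠ 0 →
      (∀ i, Y₁ i = 0 ∨ Y₂ i = 0) →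
      interForm n M (Y₁ - Y₂) (Y₁ - Y₂) ≤ -4) ∧
    (∀ Y : Fin n → ℤ, (interForm n M Y Y = -2 ∨ interForm n M Y Y = -3) →
      (∀ i, 0 ≤ Y i) ∨ (∀ i, Y i ≤ 0)) :=
  stmt_0_general n M hoff hrat
end

section
/- Let Γ be a rational triple tree with unique vertex E₀ of weight 3 and all other vertices of weight 2, and let Y = Σ aᵢEᵢ be an effective root (a nonzero effective divisor with (Y·Y) ∈ {-2,-3} and arithmetic genus pₐ(Y) ≤ 0). Then (Y·Y) = -2 if and only if a₀ = 0, and (Y·Y) = -3 if and only if a₀ = 1. -/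
/-!
Since `treeM` is symmetric, the off-diagonal part of `(Y·Y)` is even, so
`(Y·Y) ≡ -Σ wᵢ aᵢ² ≡ Σ aᵢ(wᵢ - 2) (mod 2)`: the arithmetic genus is an integer.
With the weights of a triple tree, `Σ aᵢ(wᵢ - 2) = a₀`, so `(Y·Y) ≡ a₀ (mod 2)`, while rationality
gives `a₀ ≤ -(Y·Y) - 2`. For `(Y·Y) = -2` this forces `a₀ = 0`; for `(Y·Y) = -3` it forces the odd
number `a₀ ≤ 1` to be `1`.
-/

open Finset

def treeM (n : ℕ) (G : SimpleGraph (Fin n)) [DecidableRel G.Adj] (w : Fin n → ℤ)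
    (i j : Fin n) : ℤ :=
  if i = j then -w i else if G.Adj i j then 1 else 0

def quadForm (n : ℕ) (M : Fin n → Fin n → ℤ) (Y : Fin n → ℤ) : ℤ :=
  ∑ i, ∑ j, Y i * M i j * Y j

theorem quadForm_eq_diag_add_two_mul {n : ℕ} {M : Fin n → Fin n → ℤ}
    (hM : ∀ i j, M i j = M j i) (Y : Fin n → ℤ) :
    quadForm n M Y = ∑ i, M i i * Y i ^ 2 +
      2 * ∑ i, ∑ j, if i < j then Y i * M i j * Y j else 0 := by
  have split : ∀ i j, Y i * M i j * Y j =
      ((if i < j then Y i * M i j * Y j else 0) + (if j < i then Y j * M j i * Y i else 0)) +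
        if i = j then M i i * Y i ^ 2 else 0 := by
    intro i j
    rcases lt_trichotomy i j with h | rfl | h
    · simp [h, h.ne, h.not_gt]
    · simp only [lt_self_iff_false, if_true, if_false, add_zero, zero_add]; ring
    · simp only [h, h.ne', h.not_gt, hM i j, if_true, if_false, add_zero, zero_add]; ring
  rw [quadForm, sum_congr rfl fun i _ => sum_congr rfl fun j _ => split i j]
  simp only [sum_add_distrib, sum_ite_eq, mem_univ, if_true]
  rw [sum_comm (f := fun i j => if j < i then Y j * M j i * Y i else 0)]
  ring

theorem treeM_symm {n : ℕ} (G : SimpleGraph (Fin n)) [DecidableRel G.Adj] (w : Fin n → ℤ)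
    (i j : Fin n) : treeM n G w i j = treeM n G w j i := by
  unfold treeM
  by_cases h : i = j
  · subst h; rfl
  · simp [h, Ne.symm h, G.adj_comm]

theorem even_quadForm_treeM_add_sum {n : ℕ} (G : SimpleGraph (Fin n)) [DecidableRel G.Adj]
    (w : Fin n → ℤ) (Y : Fin n → ℤ) :
    Even (quadForm n (treeM n G w) Y + ∑ i, Y i * (w i - 2)) := by
  rw [quadForm_eq_diag_add_two_mul (treeM_symm G w), add_right_comm, ← sum_add_distrib]
  refine Even.add (even_sum _ fun i _ => ?_) (even_two_mul _)
  have hsq : Even (Y i * (Y i - 1)) := Int.even_mul_pred_self _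
  have : treeM n G w i i * Y i ^ 2 + Y i * (w i - 2) = -w i * (Y i * (Y i - 1)) + 2 * -Y i := by
    simp only [treeM, if_true]; ring
  rw [this]
  exact (hsq.mul_left _).add (even_two_mul _)

theorem sum_mul_weight_sub_two {n : ℕ} (w Y : Fin (n + 1) → ℤ) (hw0 : w 0 = 3)
    (hw : ∀ i, i ≠ 0 → w i = 2) : ∑ i, Y i * (w i - 2) = Y 0 := by
  rw [sum_eq_single 0 (fun i _ hi => by rw [hw i hi, sub_self, mul_zero]) (by simp), hw0]
  ring

theorem stmt_2_general (n : ℕ) (G : SimpleGraph (Fin (n + 1))) [DecidableRel G.Adj]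
    (w : Fin (n + 1) → ℤ) (hw0 : w 0 = 3) (hw : ∀ i, i ≠ 0 → w i = 2)
    (hrat : ∀ Y' : Fin (n + 1) → ℤ, (∀ i, 0 ≤ Y' i) → Y' ≠ 0 →
      quadForm (n + 1) (treeM (n + 1) G w) Y' + (∑ i, Y' i * (w i - 2)) + 2 ≤ 0)
    (Y : Fin (n + 1) → ℤ) (hYeff : ∀ i, 0 ≤ Y i) (hYne : Y ≠ 0)
    (hroot : quadForm (n + 1) (treeM (n + 1) G w) Y = -2 ∨
      quadForm (n + 1) (treeM (n + 1) G w) Y = -3) :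
    (quadForm (n + 1) (treeM (n + 1) G w) Y = -2 ↔ Y 0 = 0) ∧
    (quadForm (n + 1) (treeM (n + 1) G w) Y = -3 ↔ Y 0 = 1) := by
  have hgenus := hrat Y hYeff hYne
  have hparity := even_quadForm_treeM_add_sum G w Y
  rw [sum_mul_weight_sub_two w Y hw0 hw] at hgenus hparity
  obtain ⟨k, hk⟩ := hparity
  have := hYeff 0
  omega

/-- A rational triple tree: vertex `0` has weight `3`, all the others weight `2`,
the intersection matrix is negative definite, and the arithmetic genus
`pₐ(Y) = ½[(Y·Y) + Σ aᵢ(wᵢ-2)] + 1` of every nonzero effective divisor is `≤ 0`.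
Then for an effective root `Y`: `(Y·Y) = -2 ↔ a₀ = 0` and `(Y·Y) = -3 ↔ a₀ = 1`. -/
theorem stmt_2 (n : ℕ) (G : SimpleGraph (Fin (n + 1))) [DecidableRel G.Adj]
    (hG : G.IsTree)
    (w : Fin (n + 1) → ℤ) (hw0 : w 0 = 3) (hw : ∀ i, i ≠ 0 → w i = 2)
    (hnegdef : ∀ x : Fin (n + 1) → ℤ, x ≠ 0 → quadForm (n + 1) (treeM (n + 1) G w) x < 0)
    (hrat : ∀ Y' : Fin (n + 1) → ℤ, (∀ i, 0 ≤ Y' i) → Y' ≠ 0 →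
      quadForm (n + 1) (treeM (n + 1) G w) Y' + (∑ i, Y' i * (w i - 2)) + 2 ≤ 0)
    (Y : Fin (n + 1) → ℤ) (hYeff : ∀ i, 0 ≤ Y i) (hYne : Y ≠ 0)
    (hroot : quadForm (n + 1) (treeM (n + 1) G w) Y = -2 ∨
      quadForm (n + 1) (treeM (n + 1) G w) Y = -3) :
    (quadForm (n + 1) (treeM (n + 1) G w) Y = -2 ↔ Y 0 = 0) ∧
    (quadForm (n + 1) (treeM (n + 1) G w) Y = -3 ↔ Y 0 = 1) :=
  stmt_2_general n G w hw0 hw hrat Y hYeff hYne hroot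
end

section
/- For the Dynkin lattice of type Aₙ with simple roots E₁,…,Eₙ, any effective nonzero divisor Y = Σᵢ aᵢEᵢ satisfies (Y·Y) ≤ -aₙ² - 1. In particular (Y·Y) ≤ -2aₙ. -/
/-!
Extending `a` by zero to `f : ℕ → ℤ`, the quadratic form of `Aₙ` is
`(Y·Y) = -f₀² - fₙ₋₁² - ∑ₖ (fₖ₊₁ - fₖ)²`. For `Y ≠ 0` the integer `f₀² + ∑ₖ (fₖ₊₁ - fₖ)²` is
positive, since otherwise `f` would be constant with value `f₀ = 0`; hence it is at least `1`.
The second bound follows from `-x² - 1 ≤ -2x`.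
-/

open Finset

/-- Intersection matrix of the Aₙ Dynkin lattice: `-2` on the diagonal, `1` for
consecutive indices, `0` otherwise. -/
def AnM (n : ℕ) (i j : Fin n) : ℤ :=
  if i = j then -2
  else if i.val + 1 = j.val ∨ j.val + 1 = i.val then 1 else 0

def anEntry (i j : ℕ) : ℤ :=
  if i = j then -2 else if i + 1 = j ∨ j + 1 = i then 1 else 0

lemma AnM_eq_anEntry {n : ℕ} (i j : Fin n) : AnM n i j = anEntry i j := by
  simp [AnM, anEntry, Fin.ext_iff]

lemma anEntry_comm (i j : ℕ) : anEntry i j = anEntry j i := by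
  unfold anEntry; split_ifs <;> omega

lemma anEntry_of_lt {i n : ℕ} (h : i < n) : anEntry i n = if i + 1 = n then 1 else 0 := by
  unfold anEntry; split_ifs <;> omega

def anForm (n : ℕ) (f : ℕ → ℤ) : ℤ :=
  ∑ i ∈ range n, ∑ j ∈ range n, f i * anEntry i j * f j

lemma sum_mul_anEntry_last (f : ℕ → ℤ) {n : ℕ} (hn : 0 < n) :
    ∑ i ∈ range n, f i * anEntry i n * f n = f (n - 1) * f n := by
  rw [sum_eq_single_of_mem (n - 1) (by simp; omega)]
  · rw [anEntry_of_lt (by omega), if_pos (by omega), mul_one]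
  · intro i hi hne
    rw [anEntry_of_lt (mem_range.mp hi), if_neg (by omega), mul_zero, zero_mul]

lemma anForm_succ (f : ℕ → ℤ) {n : ℕ} (hn : 0 < n) :
    anForm (n + 1) f = anForm n f + 2 * f (n - 1) * f n - 2 * f n ^ 2 := by
  have hrow : ∑ j ∈ range n, f n * anEntry n j * f j = f (n - 1) * f n := by
    rw [← sum_mul_anEntry_last f hn]
    refine sum_congr rfl fun j _ => ?_
    rw [anEntry_comm]; ring
  simp only [anForm, sum_range_succ, sum_add_distrib, sum_mul_anEntry_last f hn, hrow]
  have hdiag : anEntry n n = -2 := if_pos rfl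
  rw [hdiag]; ring

theorem anForm_eq (f : ℕ → ℤ) {n : ℕ} (hn : 0 < n) :
    anForm n f = -f 0 ^ 2 - f (n - 1) ^ 2 - ∑ k ∈ range (n - 1), (f (k + 1) - f k) ^ 2 := by
  induction n, hn using Nat.le_induction with
  | base => simp only [anForm, anEntry, range_one, sum_singleton, if_pos]; ring
  | succ n hn ih =>
    obtain ⟨m, rfl⟩ := Nat.exists_eq_add_of_lt hn
    rw [anForm_succ f hn, ih]
    simp only [Nat.add_sub_cancel, sum_range_succ]
    ring

lemma eq_zero_of_sq_add_sum_sq_sub_eq_zero {f : ℕ → ℤ} {m : ℕ}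
    (h : f 0 ^ 2 + ∑ k ∈ range m, (f (k + 1) - f k) ^ 2 = 0) {k : ℕ} (hk : k ≤ m) :
    f k = 0 := by
  have hsteps : 0 ≤ ∑ k ∈ range m, (f (k + 1) - f k) ^ 2 := sum_nonneg fun _ _ => sq_nonneg _
  obtain ⟨hhead, hsum⟩ := (add_eq_zero_iff_of_nonneg (sq_nonneg _) hsteps).mp h
  rw [sum_eq_zero_iff_of_nonneg fun _ _ => sq_nonneg _] at hsum
  induction k with
  | zero => exact pow_eq_zero_iff two_ne_zero |>.mp hhead
  | succ k ih =>
    have hstep := pow_eq_zero_iff two_ne_zero |>.mp (hsum k (mem_range.mpr hk))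
    linarith [ih (by omega)]

theorem anForm_le {f : ℕ → ℤ} {n : ℕ} (hn : 0 < n) (hf : ∃ k < n, f k ≠ 0) :
    anForm n f ≤ -f (n - 1) ^ 2 - 1 := by
  obtain ⟨k, hk, hfk⟩ := hf
  have hpos : 0 < f 0 ^ 2 + ∑ k ∈ range (n - 1), (f (k + 1) - f k) ^ 2 :=
    lt_of_le_of_ne (add_nonneg (sq_nonneg _) (sum_nonneg fun _ _ => sq_nonneg _))
      fun h => hfk (eq_zero_of_sq_add_sum_sq_sub_eq_zero h.symm (by omega))
  rw [anForm_eq f hn]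
  linarith

theorem stmt_5 (n : ℕ) (hn : 0 < n) (a : Fin n → ℤ)
    (hane : a ≠ 0) :
    (∑ i, ∑ j, a i * AnM n i j * a j) ≤ -(a ⟨n - 1, by omega⟩) ^ 2 - 1 ∧
    (∑ i, ∑ j, a i * AnM n i j * a j) ≤ -2 * a ⟨n - 1, by omega⟩ := by
  set f : ℕ → ℤ := fun k => if h : k < n then a ⟨k, h⟩ else 0
  have hform : ∑ i, ∑ j, a i * AnM n i j * a j = anForm n f := by
    simp [anForm, sum_range, AnM_eq_anEntry, f]
  have hlast : f (n - 1) = a ⟨n - 1, by omega⟩ := dif_pos (by omega)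
  have hf : ∃ k < n, f k ≠ 0 := by
    obtain ⟨i, hi⟩ := Function.ne_iff.mp hane
    exact ⟨i, i.isLt, by simpa [f] using hi⟩
  have hle := anForm_le hn hf
  rw [hform, ← hlast]
  exact ⟨hle, by nlinarith [sq_nonneg (f (n - 1) - 1)]⟩
end

section
/- The number of roots in the triple root system R(A_{n,m,k}) equals n² + m² + k² + n + m + k + 2(n+1)(m+1)(k+1). -/
open Finset

/-- Vertices of the triple diagram `A_{n,m,k}`: the central weight-3 vertex `none`
together with three chains of lengths `n`, `m`, `k`. -/
abbrev AnmkV (n m k : ℕ) := Option (Fin n ⊕ Fin m ⊕ Fin k)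

/-- Adjacency of `A_{n,m,k}`: the central vertex is adjacent to the first vertex of
each chain, and consecutive vertices of each chain are adjacent. -/
def AnmkAdj (n m k : ℕ) : AnmkV n m k → AnmkV n m k → Bool
  | none, some (Sum.inl i) => decide (i.val = 0)
  | some (Sum.inl i), none => decide (i.val = 0)
  | none, some (Sum.inr (Sum.inl i)) => decide (i.val = 0)
  | some (Sum.inr (Sum.inl i)), none => decide (i.val = 0)
  | none, some (Sum.inr (Sum.inr i)) => decide (i.val = 0)
  | some (Sum.inr (Sum.inr i)), none => decide (i.val = 0)
  | some (Sum.inl i), some (Sum.inl j) => decide (i.val + 1 = j.val ∨ j.val + 1 = i.val)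
  | some (Sum.inr (Sum.inl i)), some (Sum.inr (Sum.inl j)) =>
      decide (i.val + 1 = j.val ∨ j.val + 1 = i.val)
  | some (Sum.inr (Sum.inr i)), some (Sum.inr (Sum.inr j)) =>
      decide (i.val + 1 = j.val ∨ j.val + 1 = i.val)
  | _, _ => false

/-- Intersection matrix of `A_{n,m,k}`: `-3` at the central vertex, `-2` at the
other vertices, `1` for adjacent pairs, `0` otherwise. -/
def AnmkM (n m k : ℕ) (x y : AnmkV n m k) : ℤ :=
  if x = y then (if x = none then -3 else -2)
  else if AnmkAdj n m k x y then 1 else 0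

/-- Self-intersection of a divisor on `A_{n,m,k}`. -/
def AnmkQ (n m k : ℕ) (Y : AnmkV n m k → ℤ) : ℤ :=
  ∑ x, ∑ y, Y x * AnmkM n m k x y * Y y


/-!
Write `c` for the value of a divisor at the central vertex. Along each chain, the differences
`d` of the sequence `c, y₀, …, y_{N-1}, 0` determine the values, are subject only to `∑ d = c`,
and the contribution of the chain to the self-intersection is `-∑ d²`. So
`-(Y·Y) = |d₁|² + |d₂|² + |d₃|²` with all `∑ dⱼ = c`.
Since `|dⱼ|² ≥ |c|` and `|dⱼ|² ≡ c (mod 2)`, a root either has `c = 0` and a single nonzero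
`dⱼ = e_a - e_b`, a root of type `A_{Nⱼ}` (`Nⱼ (Nⱼ + 1)` choices), or `c = ±1` and `dⱼ = c e_{tⱼ}`
for all `j` (`2 ∏ (Nⱼ + 1)` choices).

Effectivity is automatic: every nonzero divisor has `Y·Y ≤ -2` and the off-diagonal entries are
nonnegative, so `Y = Y⁺ - Y⁻` with both parts nonzero would have `Y·Y ≤ -4`.
-/

section SumsOfSquares

variable {ι : Type*} [Fintype ι]

theorem abs_sum_le_sum_sq (d : ι → ℤ) : |∑ i, d i| ≤ ∑ i, d i ^ 2 :=
  (abs_sum_le_sum_abs _ _).trans <| sum_le_sum fun i _ => by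
    simpa only [Int.natCast_natAbs] using Int.natAbs_le_self_sq (d i)

theorem even_sum_sq_sub_sum (d : ι → ℤ) : Even (∑ i, d i ^ 2 - ∑ i, d i) := by
  rw [← sum_sub_distrib]
  exact even_sum _ fun i _ => by simpa [sq, mul_sub] using Int.even_mul_pred_self (d i)

theorem sum_sq_eq_zero_iff {d : ι → ℤ} : ∑ i, d i ^ 2 = 0 ↔ d = 0 := by
  simp [sq, sum_mul_self_eq_zero_iff, funext_iff]

end SumsOfSquares

abbrev NePair (ι : Type*) := {p : ι × ι // p.1 ≠ p.2}

section PairRoots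

variable {ι : Type*} [DecidableEq ι]

def pairRoot (p : NePair ι) : ι → ℤ :=
  Pi.single p.1.1 1 - Pi.single p.1.2 1

theorem pairRoot_injective :
    Function.Injective (pairRoot (ι := ι)) := by
  rintro ⟨⟨a, b⟩, hab⟩ ⟨⟨a', b'⟩, hab'⟩ h
  have ha := congrFun h a
  have hb := congrFun h b
  simp only [pairRoot, Pi.sub_apply, Pi.single_apply] at ha hb
  simp only [Subtype.mk.injEq, Prod.mk.injEq]
  split_ifs at ha hb <;> simp_all

theorem single_unit_inj {ε ε' : ℤˣ} {t t' : ι} :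
    (Pi.single t (ε : ℤ) : ι → ℤ) = Pi.single t' (ε' : ℤ) ↔ ε = ε' ∧ t = t' := by
  refine ⟨fun h => ?_, fun ⟨hε, ht⟩ => hε ▸ ht ▸ rfl⟩
  have ht := congrFun h t
  simp only [Pi.single_eq_same, Pi.single_apply] at ht
  split_ifs at ht with htt
  · exact ⟨Units.ext ht, htt⟩
  · exact absurd ht ε.ne_zero

variable [Fintype ι]

theorem card_nePair :
    Fintype.card (NePair ι) = Fintype.card ι * (Fintype.card ι - 1) := by
  rw [Fintype.card_subtype, Nat.mul_sub_one, ← card_univ, ← offDiag_card]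
  congr 1
  ext
  simp

theorem sum_pairRoot (p : NePair ι) : ∑ i, pairRoot p i = 0 := by
  simp [pairRoot, sum_sub_distrib]

theorem sum_sq_pairRoot (p : NePair ι) : ∑ i, pairRoot p i ^ 2 = 2 := by
  obtain ⟨⟨a, b⟩, hab⟩ := p
  have h : ∀ i, pairRoot ⟨(a, b), hab⟩ i ^ 2
      = (Pi.single a 1 : ι → ℤ) i + (Pi.single b 1 : ι → ℤ) i := by
    intro i
    simp only [pairRoot, Pi.sub_apply, Pi.single_apply]
    split_ifs <;> simp_all
  simp [h, sum_add_distrib]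

theorem pairRoot_ne_zero (p : NePair ι) : pairRoot p ≠ 0 := by
  intro h
  simpa [h] using sum_sq_pairRoot p

theorem sum_sq_single (t : ι) (x : ℤ) :
    ∑ i, (Pi.single t x : ι → ℤ) i ^ 2 = x ^ 2 := by
  rw [Fintype.sum_eq_single t fun i hi => by simp [hi]]
  simp

theorem sum_update_zero (f : ι → ℤ) (a : ι) :
    ∑ i, Function.update f a 0 i = ∑ i, f i - f a := by
  rw [sum_update_of_mem (mem_univ a), Fintype.sum_eq_add_sum_compl a f, compl_eq_univ_sdiff]
  ring

theorem exists_eq_single_of_sum_sq_eq_one {d : ι → ℤ}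
    (h : ∑ i, d i ^ 2 = 1) : ∃ t, d = Pi.single t (∑ i, d i) := by
  obtain ⟨t, ht⟩ : ∃ t, d t ≠ 0 := by
    by_contra! h0
    simp [show d = 0 from funext h0] at h
  have hrest : ∑ i ∈ univ.erase t, d i ^ 2 = 0 := by
    have := add_sum_erase univ (fun i => d i ^ 2) (mem_univ t)
    have := sum_nonneg fun i (_ : i ∈ univ.erase t) => sq_nonneg (d i)
    have : 1 ≤ d t ^ 2 := by nlinarith [Int.one_le_abs ht, sq_abs (d t)]
    omega
  have hd : ∀ i ≠ t, d i = 0 := fun i hi => pow_eq_zero_iff two_ne_zero |>.mp <|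
    (sum_eq_zero_iff_of_nonneg fun j _ => sq_nonneg (d j)).mp hrest i
      (mem_erase.mpr ⟨hi, mem_univ i⟩)
  refine ⟨t, ?_⟩
  rw [Fintype.sum_eq_single t hd]
  funext i
  rcases eq_or_ne i t with rfl | hi
  · simp
  · rw [Pi.single_eq_of_ne hi, hd i hi]

theorem exists_eq_pairRoot {d : ι → ℤ} (h2 : ∑ i, d i ^ 2 = 2)
    (h0 : ∑ i, d i = 0) : ∃ p, d = pairRoot p := by
  obtain ⟨a, ha⟩ : ∃ a, 0 < d a := by
    by_contra! hle
    have := (sum_eq_zero_iff_of_nonpos fun i _ => hle i).mp h0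
    simp [this] at h2
  have ha1 : d a = 1 := by
    have := single_le_sum (fun i _ => sq_nonneg (d i)) (mem_univ a)
    nlinarith
  set e := Function.update d a 0 with he
  have hsq : ∑ i, e i ^ 2 = 1 := by
    have hpt : ∀ i, e i ^ 2 = Function.update (fun i => d i ^ 2) a 0 i := fun i => by
      simp only [he, Function.update_apply]
      split_ifs <;> simp
    simp only [hpt, sum_update_zero, h2, ha1]
    norm_num
  have hsum : ∑ i, e i = -1 := by rw [he, sum_update_zero, h0, ha1]; norm_num
  obtain ⟨b, hb⟩ := exists_eq_single_of_sum_sq_eq_one hsq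
  rw [hsum] at hb
  have hab : a ≠ b := by
    rintro rfl
    simpa [he] using congrFun hb a
  refine ⟨⟨(a, b), hab⟩, funext fun i => ?_⟩
  have hi := congrFun hb i
  simp only [he, Function.update_apply] at hi
  simp only [pairRoot, Pi.sub_apply, Pi.single_apply] at hi ⊢
  split_ifs at hi ⊢ <;> simp_all

end PairRoots

theorem nonneg_or_nonpos_of_quadForm {ι : Type*} [Fintype ι] {M : ι → ι → ℤ}
    (hM : ∀ x y, x ≠ y → 0 ≤ M x y) {a : ℤ}
    (ha : ∀ Y : ι → ℤ, Y ≠ 0 → ∑ x, ∑ y, Y x * M x y * Y y ≤ -a)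
    {Y : ι → ℤ} (hY : -(2 * a) < ∑ x, ∑ y, Y x * M x y * Y y) :
    (∀ i, 0 ≤ Y i) ∨ ∀ i, Y i ≤ 0 := by
  set P : ι → ℤ := fun i => max (Y i) 0
  set N : ι → ℤ := fun i => max (-Y i) 0
  have hPN : ∀ i, Y i = P i - N i := fun i => by simp only [P, N]; omega
  have hcross : 0 ≤ ∑ x, ∑ y, (P x * M x y * N y + N x * M x y * P y) :=
    sum_nonneg fun x _ => sum_nonneg fun y _ => by
      rcases eq_or_ne x y with rfl | hxy
      · have : P x * N x = 0 := by
          simp only [P, N]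
          rcases le_total 0 (Y x) with h | h <;> simp [h]
        rw [show P x * M x x * N x + N x * M x x * P x = 2 * M x x * (P x * N x) by ring, this,
          mul_zero]
      · have := hM x y hxy
        positivity
  have hsplit : ∑ x, ∑ y, Y x * M x y * Y y = ∑ x, ∑ y, P x * M x y * P y
      + ∑ x, ∑ y, N x * M x y * N y - ∑ x, ∑ y, (P x * M x y * N y + N x * M x y * P y) := by
    simp only [← sum_add_distrib, ← sum_sub_distrib, hPN]
    exact sum_congr rfl fun x _ => sum_congr rfl fun y _ => by ring
  by_contra! h
  obtain ⟨⟨i, hi⟩, ⟨j, hj⟩⟩ := h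
  have hP : P ≠ 0 := fun h0 => by have := congrFun h0 j; simp only [P, Pi.zero_apply] at this; omega
  have hN : N ≠ 0 := fun h0 => by have := congrFun h0 i; simp only [N, Pi.zero_apply] at this; omega
  linarith [ha P hP, ha N hN]

section Chain

def chainMatrix {N : ℕ} (i j : Fin N) : ℤ :=
  if i = j then -2 else if (i : ℕ) + 1 = j ∨ (j : ℕ) + 1 = i then 1 else 0

/-- The central weight `3` is shared out as `1` per chain, hence the `-c ^ 2`. -/
def chainForm {N : ℕ} (c : ℤ) (y : Fin N → ℤ) : ℤ :=
  -c ^ 2 + 2 * c * ∑ i : Fin N, (if (i : ℕ) = 0 then y i else 0)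
    + ∑ i, ∑ j, y i * chainMatrix i j * y j

/-- The successive differences of `c, y 0, …, y (N - 1), 0`. -/
def chainDiff : {N : ℕ} → ℤ → (Fin N → ℤ) → Fin (N + 1) → ℤ
  | 0, c, _ => fun _ => c
  | _ + 1, c, y => Fin.cons (c - y 0) (chainDiff (y 0) (Fin.tail y))

theorem sum_chainDiff : ∀ {N : ℕ} (c : ℤ) (y : Fin N → ℤ), ∑ i, chainDiff c y i = c
  | 0, c, y => by simp [chainDiff]
  | _ + 1, c, y => by simp [chainDiff, Fin.sum_cons, sum_chainDiff]

theorem chainDiff_injective : ∀ {N : ℕ} (c : ℤ), Function.Injective (chainDiff (N := N) c)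
  | 0, _, y, y', _ => Subsingleton.elim y y'
  | _ + 1, c, y, y', h => by
    simp only [chainDiff, Fin.cons_inj, sub_right_inj] at h
    obtain ⟨h0, ht⟩ := h
    rw [h0] at ht
    rw [← Fin.cons_self_tail y, ← Fin.cons_self_tail y', h0, chainDiff_injective _ ht]

theorem exists_chainDiff_eq : ∀ {N : ℕ} {c : ℤ} {d : Fin (N + 1) → ℤ}, ∑ i, d i = c →
    ∃ y : Fin N → ℤ, chainDiff c y = d
  | 0, c, d, h => ⟨Fin.elim0, funext fun i => by fin_cases i; simpa [chainDiff] using h.symm⟩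
  | _ + 1, c, d, h => by
    obtain ⟨y, hy⟩ := exists_chainDiff_eq (d := Fin.tail d) rfl
    refine ⟨Fin.cons (∑ i, Fin.tail d i) y, ?_⟩
    conv_rhs => rw [← Fin.cons_self_tail d, ← hy]
    rw [← h, Fin.sum_univ_succ]
    simp [chainDiff, Fin.tail]

theorem chainDiff_zero : ∀ {N : ℕ}, chainDiff 0 (0 : Fin N → ℤ) = 0
  | 0 => by funext; simp [chainDiff]
  | N + 1 => by
    have : Fin.tail (0 : Fin (N + 1) → ℤ) = 0 := rfl
    simp only [chainDiff, Pi.zero_apply, sub_self, this, chainDiff_zero]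
    exact Matrix.cons_zero_zero

theorem chainForm_succ {N : ℕ} (c : ℤ) (y : Fin (N + 1) → ℤ) :
    chainForm c y = -(c - y 0) ^ 2 + chainForm (y 0) (Fin.tail y) := by
  simp only [chainForm, chainMatrix, Fin.sum_univ_succ, Fin.tail, Fin.succ_inj, Fin.val_succ,
    Fin.val_zero, Fin.succ_ne_zero, (Fin.succ_ne_zero _).symm, Nat.add_right_cancel_iff,
    Nat.add_eq_zero_iff, Nat.right_eq_add, @eq_comm ℕ 0, one_ne_zero, and_false, false_or, or_false,
    ↓reduceIte, sum_add_distrib, sum_const_zero, mul_sum, mul_ite, ite_mul, mul_zero, zero_mul]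
  ring_nf
  simp only [sum_mul, ite_mul, zero_mul]
  ring_nf

theorem chainForm_eq_neg_sum_sq : ∀ {N : ℕ} (c : ℤ) (y : Fin N → ℤ),
    chainForm c y = -∑ i, chainDiff c y i ^ 2
  | 0, c, y => by simp [chainForm, chainDiff]
  | _ + 1, c, y => by
    rw [chainDiff, Fin.sum_univ_succ, Fin.cons_zero]
    simp only [Fin.cons_succ]
    rw [chainForm_succ, chainForm_eq_neg_sum_sq]
    ring

end Chain

section Anmk

variable {n m k : ℕ}

theorem AnmkQ_eq_sum_chainForm (Y : AnmkV n m k → ℤ) :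
    AnmkQ n m k Y = chainForm (Y none) (fun i => Y (some (Sum.inl i)))
      + chainForm (Y none) (fun i => Y (some (Sum.inr (Sum.inl i))))
      + chainForm (Y none) (fun i => Y (some (Sum.inr (Sum.inr i)))) := by
  simp only [AnmkQ, Fintype.sum_option, Fintype.sum_sum_type]
  simp only [AnmkM, AnmkAdj, chainForm, chainMatrix, Option.some.injEq, Sum.inl.injEq,
    Sum.inr.injEq, reduceCtorEq, ↓reduceIte, decide_eq_true_eq, Bool.decide_or, Bool.or_eq_true,
    Bool.false_eq_true, mul_ite, ite_mul, mul_one, mul_zero, zero_mul, sum_const_zero, add_zero,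
    zero_add, sum_add_distrib, mul_sum]
  ring_nf
  simp only [sum_mul, ite_mul, zero_mul]
  ring_nf

theorem AnmkM_nonneg_of_ne {x y : AnmkV n m k} (h : x ≠ y) : 0 ≤ AnmkM n m k x y := by
  unfold AnmkM
  rw [if_neg h]
  split_ifs <;> norm_num

abbrev ChainDiffs (n m k : ℕ) := (Fin (n + 1) → ℤ) × (Fin (m + 1) → ℤ) × (Fin (k + 1) → ℤ)

def anmkDiffs (Y : AnmkV n m k → ℤ) : ChainDiffs n m k :=
  (chainDiff (Y none) fun i => Y (some (Sum.inl i)),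
    chainDiff (Y none) fun i => Y (some (Sum.inr (Sum.inl i))),
    chainDiff (Y none) fun i => Y (some (Sum.inr (Sum.inr i))))

def diffsNormSq (D : ChainDiffs n m k) : ℤ :=
  ∑ i, D.1 i ^ 2 + ∑ i, D.2.1 i ^ 2 + ∑ i, D.2.2 i ^ 2

theorem AnmkQ_eq_neg_diffsNormSq (Y : AnmkV n m k → ℤ) :
    AnmkQ n m k Y = -diffsNormSq (anmkDiffs Y) := by
  simp only [AnmkQ_eq_sum_chainForm, chainForm_eq_neg_sum_sq, diffsNormSq, anmkDiffs]
  ring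

theorem sum_anmkDiffs (Y : AnmkV n m k → ℤ) :
    ∑ i, (anmkDiffs Y).1 i = Y none ∧ ∑ i, (anmkDiffs Y).2.1 i = Y none
      ∧ ∑ i, (anmkDiffs Y).2.2 i = Y none :=
  ⟨sum_chainDiff _ _, sum_chainDiff _ _, sum_chainDiff _ _⟩

theorem anmkDiffs_injective : Function.Injective (anmkDiffs (n := n) (m := m) (k := k)) := by
  intro Y Y' h
  have hc : Y none = Y' none := by rw [← (sum_anmkDiffs Y).1, h, (sum_anmkDiffs Y').1]
  simp only [anmkDiffs, Prod.mk.injEq, hc] at h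
  obtain ⟨h₁, h₂, h₃⟩ := h
  funext x
  rcases x with _ | i | i | i
  · exact hc
  · exact congrFun (chainDiff_injective _ h₁) i
  · exact congrFun (chainDiff_injective _ h₂) i
  · exact congrFun (chainDiff_injective _ h₃) i

theorem anmkDiffs_zero : anmkDiffs (0 : AnmkV n m k → ℤ) = 0 := by
  simp only [anmkDiffs, Pi.zero_apply]
  exact congrArg₂ Prod.mk chainDiff_zero (congrArg₂ Prod.mk chainDiff_zero chainDiff_zero)

theorem exists_anmkDiffs_eq {D : ChainDiffs n m k} (h₂ : ∑ i, D.2.1 i = ∑ i, D.1 i)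
    (h₃ : ∑ i, D.2.2 i = ∑ i, D.1 i) : ∃ Y, anmkDiffs Y = D := by
  obtain ⟨d₁, d₂, d₃⟩ := D
  dsimp only at h₂ h₃
  generalize hc : ∑ i, d₁ i = c at h₂ h₃
  obtain ⟨y₁, hy₁⟩ := exists_chainDiff_eq hc
  obtain ⟨y₂, hy₂⟩ := exists_chainDiff_eq h₂
  obtain ⟨y₃, hy₃⟩ := exists_chainDiff_eq h₃
  refine ⟨fun x => x.elim c (Sum.elim y₁ (Sum.elim y₂ y₃)), ?_⟩
  rw [← hy₁, ← hy₂, ← hy₃]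
  rfl

theorem AnmkQ_le_neg_two_of_ne_zero {Y : AnmkV n m k → ℤ} (hY : Y ≠ 0) :
    AnmkQ n m k Y ≤ -2 := by
  rw [AnmkQ_eq_neg_diffsNormSq, diffsNormSq]
  obtain ⟨h₁, h₂, h₃⟩ := sum_anmkDiffs Y
  have hs₁ := abs_sum_le_sum_sq (anmkDiffs Y).1
  have hs₂ := abs_sum_le_sum_sq (anmkDiffs Y).2.1
  have hs₃ := abs_sum_le_sum_sq (anmkDiffs Y).2.2
  rw [h₁] at hs₁
  rw [h₂] at hs₂
  rw [h₃] at hs₃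
  by_contra! hlt
  rcases eq_or_ne (Y none) 0 with hc | hc
  · obtain ⟨r₁, hr₁⟩ := even_sum_sq_sub_sum (anmkDiffs Y).1
    obtain ⟨r₂, hr₂⟩ := even_sum_sq_sub_sum (anmkDiffs Y).2.1
    obtain ⟨r₃, hr₃⟩ := even_sum_sq_sub_sum (anmkDiffs Y).2.2
    rw [h₁, hc] at hr₁
    rw [h₂, hc] at hr₂
    rw [h₃, hc] at hr₃
    rw [hc, abs_zero] at hs₁ hs₂ hs₃
    refine hY (anmkDiffs_injective ?_)
    rw [anmkDiffs_zero, Prod.ext_iff, Prod.ext_iff]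
    simp only [Prod.fst_zero, Prod.snd_zero, ← sum_sq_eq_zero_iff]
    omega
  · have := Int.one_le_abs hc
    omega

theorem setOf_root_eq : {Y : AnmkV n m k → ℤ | Y ≠ 0 ∧ ((∀ i, 0 ≤ Y i) ∨ (∀ i, Y i ≤ 0)) ∧
      (AnmkQ n m k Y = -2 ∨ AnmkQ n m k Y = -3)}
      = {Y | AnmkQ n m k Y = -2 ∨ AnmkQ n m k Y = -3} := by
  ext Y
  simp only [Set.mem_ofPred_eq]
  refine ⟨fun h => h.2.2, fun h => ⟨?_, ?_, h⟩⟩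
  · rintro rfl
    simp [AnmkQ] at h
  · exact nonneg_or_nonpos_of_quadForm (fun _ _ => AnmkM_nonneg_of_ne)
      (fun _ => AnmkQ_le_neg_two_of_ne_zero) (show -(2 * 2) < AnmkQ n m k Y by omega)

def IsRootDiffs (D : ChainDiffs n m k) : Prop :=
  ∑ i, D.2.1 i = ∑ i, D.1 i ∧ ∑ i, D.2.2 i = ∑ i, D.1 i
    ∧ (diffsNormSq D = 2 ∨ diffsNormSq D = 3)

theorem image_anmkDiffs :
    anmkDiffs '' {Y | AnmkQ n m k Y = -2 ∨ AnmkQ n m k Y = -3} = {D | IsRootDiffs D} := by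
  ext D
  simp only [Set.mem_image, Set.mem_ofPred_eq, AnmkQ_eq_neg_diffsNormSq]
  constructor
  · rintro ⟨Y, hY, rfl⟩
    obtain ⟨h₁, h₂, h₃⟩ := sum_anmkDiffs Y
    exact ⟨h₂.trans h₁.symm, h₃.trans h₁.symm, by omega⟩
  · rintro ⟨h₂, h₃, hS⟩
    obtain ⟨Y, rfl⟩ := exists_anmkDiffs_eq h₂ h₃
    exact ⟨Y, by omega, rfl⟩

abbrev RootParam (n m k : ℕ) :=
  (NePair (Fin (n + 1)) ⊕ NePair (Fin (m + 1)) ⊕ NePair (Fin (k + 1)))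
    ⊕ ℤˣ × Fin (n + 1) × Fin (m + 1) × Fin (k + 1)

theorem card_rootParam : Fintype.card (RootParam n m k)
    = (n + 1) * n + (m + 1) * m + (k + 1) * k + 2 * ((n + 1) * (m + 1) * (k + 1)) := by
  simp only [Fintype.card_sum, Fintype.card_prod, card_nePair, Fintype.card_fin,
    Fintype.card_units_int, Nat.add_sub_cancel]
  ring

def rootDiffs : RootParam n m k → ChainDiffs n m k :=
  Sum.elim
    (Sum.elim (fun p => (pairRoot p, 0, 0))
      (Sum.elim (fun p => (0, pairRoot p, 0)) fun p => (0, 0, pairRoot p)))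
    fun q => (Pi.single q.2.1 (q.1 : ℤ), Pi.single q.2.2.1 (q.1 : ℤ), Pi.single q.2.2.2 (q.1 : ℤ))

theorem rootDiffs_injective : Function.Injective (rootDiffs (n := n) (m := m) (k := k)) := by
  refine .sumElim (.sumElim ?_ (.sumElim ?_ ?_ ?_) ?_) ?_ ?_
  · exact fun p q h => pairRoot_injective (congrArg Prod.fst h)
  · exact fun p q h => pairRoot_injective (congrArg (·.2.1) h)
  · exact fun p q h => pairRoot_injective (congrArg (·.2.2) h)
  · exact fun p q h => pairRoot_ne_zero p (congrArg (·.2.1) h)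
  · rintro p (q | q) h
    · exact pairRoot_ne_zero p (congrArg (·.1) h)
    · exact pairRoot_ne_zero p (congrArg (·.1) h)
  · rintro ⟨ε, t₁, t₂, t₃⟩ ⟨ε', t₁', t₂', t₃'⟩ h
    simp only [Prod.mk.injEq, single_unit_inj] at h
    obtain ⟨⟨rfl, rfl⟩, ⟨-, rfl⟩, ⟨-, rfl⟩⟩ := h
    rfl
  · rintro (p | p | p) ⟨ε, t₁, t₂, t₃⟩ h <;>
      exact ε.ne_zero (by simpa [sum_pairRoot] using (congrArg (fun D => ∑ i, D.1 i) h).symm)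

theorem isRootDiffs_rootDiffs (p : RootParam n m k) : IsRootDiffs (rootDiffs p) := by
  rcases p with (p | p | p) | ⟨ε, t₁, t₂, t₃⟩
  iterate 3 simp [IsRootDiffs, diffsNormSq, rootDiffs, sum_pairRoot, sum_sq_pairRoot]
  simp [IsRootDiffs, diffsNormSq, rootDiffs, sum_sq_single, Int.isUnit_sq ε.isUnit]

theorem mem_range_rootDiffs_of_sum_eq_zero {D : ChainDiffs n m k} (hD : IsRootDiffs D)
    (hc : ∑ i, D.1 i = 0) : D ∈ Set.range rootDiffs := by
  obtain ⟨d₁, d₂, d₃⟩ := D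
  obtain ⟨h₂, h₃, hS⟩ := hD
  simp only [diffsNormSq] at h₂ h₃ hS hc
  rw [hc] at h₂ h₃
  have hs₁ := abs_sum_le_sum_sq d₁
  have hs₂ := abs_sum_le_sum_sq d₂
  have hs₃ := abs_sum_le_sum_sq d₃
  obtain ⟨r₁, hr₁⟩ := even_sum_sq_sub_sum d₁
  obtain ⟨r₂, hr₂⟩ := even_sum_sq_sub_sum d₂
  obtain ⟨r₃, hr₃⟩ := even_sum_sq_sub_sum d₃
  rw [hc, abs_zero] at hs₁
  rw [h₂, abs_zero] at hs₂
  rw [h₃, abs_zero] at hs₃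
  obtain ⟨e₁, rfl, rfl⟩ | ⟨rfl, e₂, rfl⟩ | ⟨rfl, rfl, e₃⟩ :
      (∑ i, d₁ i ^ 2 = 2 ∧ d₂ = 0 ∧ d₃ = 0) ∨ (d₁ = 0 ∧ ∑ i, d₂ i ^ 2 = 2 ∧ d₃ = 0)
        ∨ (d₁ = 0 ∧ d₂ = 0 ∧ ∑ i, d₃ i ^ 2 = 2) := by
    simp only [← sum_sq_eq_zero_iff]
    omega
  · obtain ⟨p, rfl⟩ := exists_eq_pairRoot e₁ hc
    exact ⟨.inl (.inl p), rfl⟩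
  · obtain ⟨p, rfl⟩ := exists_eq_pairRoot e₂ h₂
    exact ⟨.inl (.inr (.inl p)), rfl⟩
  · obtain ⟨p, rfl⟩ := exists_eq_pairRoot e₃ h₃
    exact ⟨.inl (.inr (.inr p)), rfl⟩

theorem mem_range_rootDiffs_of_sum_ne_zero {D : ChainDiffs n m k} (hD : IsRootDiffs D)
    (hc : ∑ i, D.1 i ≠ 0) : D ∈ Set.range rootDiffs := by
  obtain ⟨d₁, d₂, d₃⟩ := D
  obtain ⟨h₂, h₃, hS⟩ := hD
  simp only [diffsNormSq] at h₂ h₃ hS hc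
  have hs₁ := abs_sum_le_sum_sq d₁
  have hs₂ := abs_sum_le_sum_sq d₂
  have hs₃ := abs_sum_le_sum_sq d₃
  rw [h₂] at hs₂
  rw [h₃] at hs₃
  have := Int.one_le_abs hc
  obtain ⟨e₁, e₂, e₃, hc₁⟩ : ∑ i, d₁ i ^ 2 = 1 ∧ ∑ i, d₂ i ^ 2 = 1 ∧ ∑ i, d₃ i ^ 2 = 1
      ∧ |∑ i, d₁ i| = 1 := by
    omega
  obtain ⟨ε, hε⟩ := Int.isUnit_iff_abs_eq.mpr hc₁
  obtain ⟨t₁, ht₁⟩ := exists_eq_single_of_sum_sq_eq_one e₁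
  obtain ⟨t₂, ht₂⟩ := exists_eq_single_of_sum_sq_eq_one e₂
  obtain ⟨t₃, ht₃⟩ := exists_eq_single_of_sum_sq_eq_one e₃
  refine ⟨.inr (ε, t₁, t₂, t₃), ?_⟩
  rw [ht₁, ht₂, ht₃, h₂, h₃, ← hε]
  rfl

theorem range_rootDiffs : Set.range rootDiffs = {D : ChainDiffs n m k | IsRootDiffs D} := by
  ext D
  refine ⟨?_, fun hD => ?_⟩
  · rintro ⟨p, rfl⟩
    exact isRootDiffs_rootDiffs p
  · rcases eq_or_ne (∑ i, D.1 i) 0 with hc | hc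
    exacts [mem_range_rootDiffs_of_sum_eq_zero hD hc, mem_range_rootDiffs_of_sum_ne_zero hD hc]

end Anmk

theorem stmt_6 (n m k : ℕ) :
    {Y : AnmkV n m k → ℤ | Y ≠ 0 ∧ ((∀ i, 0 ≤ Y i) ∨ (∀ i, Y i ≤ 0)) ∧
      (AnmkQ n m k Y = -2 ∨ AnmkQ n m k Y = -3)}.ncard
    = n ^ 2 + m ^ 2 + k ^ 2 + n + m + k + 2 * (n + 1) * (m + 1) * (k + 1) := by
  rw [setOf_root_eq, ← Set.ncard_image_of_injective _ anmkDiffs_injective, image_anmkDiffs,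
    ← range_rootDiffs, Set.ncard_range_of_injective rootDiffs_injective,
    Nat.card_eq_fintype_card, card_rootParam]
  ring
end

section
/- For n ≥ 5, the number of roots in the triple root system R(Hₙ) equals (n³ - n)/3. -/
/-!
Record a divisor `Y` by its coefficient `y₀` at `E₀` and its steps `sᵢ` along the path
`0, E₁, …, E_{n-1}, 0`. Completing squares gives `(Y·Y) = 2 y₀ y₃ - 3 y₀² - ∑ sᵢ²`, where
`∑ sᵢ = 0` and `y₃ = s₀ + s₁ + s₂`. For an effective root this forces `y₀ ∈ {0, 1}`. If `y₀ = 0`,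
the steps are `e_u - e_v` with `u < v`: the `C(n, 2)` roots of the chain. If `y₀ = 1`, both
`∑_{i<3} (sᵢ² - sᵢ)` and `∑_{i≥3} (sᵢ² + sᵢ)` are even and nonnegative, hence zero, so the steps
are `𝟙_P - 𝟙_N` with `P ⊆ {0, 1, 2}`, `N ⊆ {3, …, n-1}`, `|P| = |N|`: there are
`∑ₖ C(3, k) C(n-3, k) = C(n, 3)` of them. Negation matches effective with anti-effective roots,
so there are `2 (C(n, 2) + C(n, 3)) = 2 C(n+1, 3) = (n³ - n)/3` roots.
-/

open Finset

/-- Adjacency of the triple diagram `Hₙ`: vertices `E₀,…,E_{n-1}` (indexed by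
naturals `< n`), with the chain `E₁—E₂—⋯—E_{n-1}` and the weight-3 vertex `E₀`
attached to `E₃`. -/
def HAdj (i j : ℕ) : Bool :=
  decide ((i = 0 ∧ j = 3) ∨ (j = 0 ∧ i = 3) ∨ (1 ≤ i ∧ i + 1 = j) ∨ (1 ≤ j ∧ j + 1 = i))

/-- Intersection matrix of `Hₙ`: `-3` at `E₀`, `-2` at the other vertices, `1` for
adjacent pairs, `0` otherwise. -/
def HM (i j : ℕ) : ℤ :=
  if i = j then (if i = 0 then -3 else -2) else if HAdj i j then 1 else 0

/-- Self-intersection of a divisor supported on the vertices of `Hₙ`. -/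
def HQ (n : ℕ) (Y : ℕ → ℤ) : ℤ :=
  ∑ i ∈ Finset.range n, ∑ j ∈ Finset.range n, Y i * HM i j * Y j

/-- The triple root system of `Hₙ`. -/
def HRoots (n : ℕ) : Set (ℕ → ℤ) :=
  {Y : ℕ → ℤ | (∀ i, n ≤ i → Y i = 0) ∧ Y ≠ 0 ∧
    ((∀ i, 0 ≤ Y i) ∨ (∀ i, Y i ≤ 0)) ∧ (HQ n Y = -2 ∨ HQ n Y = -3)}

/-- The differences of `Y` along `0, E₁, E₂, …`; the coefficient of `E₀` is replaced by `0`, so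
`chainSteps Y 0 = Y 1`. -/
def chainSteps (Y : ℕ → ℤ) (i : ℕ) : ℤ := Function.update Y 0 0 (i + 1) - Function.update Y 0 0 i

def ofSteps (y₀ : ℤ) (s : ℕ → ℤ) : ℕ → ℤ := Function.update (fun j => ∑ i ∈ range j, s i) 0 y₀

section Steps

variable {Y : ℕ → ℤ}

theorem sum_range_chainSteps (Y : ℕ → ℤ) {j : ℕ} (hj : j ≠ 0) :
    ∑ i ∈ range j, chainSteps Y i = Y j := by
  simp only [chainSteps, Finset.sum_range_sub (Function.update Y 0 0), Function.update_of_ne hj,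
    Function.update_self, sub_zero]

theorem chainSteps_of_ne_zero {i : ℕ} (hi : i ≠ 0) : chainSteps Y i = Y (i + 1) - Y i := by
  simp [chainSteps, hi]

theorem ofSteps_chainSteps (Y : ℕ → ℤ) : ofSteps (Y 0) (chainSteps Y) = Y := by
  funext j
  rcases eq_or_ne j 0 with rfl | hj
  · simp [ofSteps]
  · simp [ofSteps, hj, sum_range_chainSteps Y hj]

theorem chainSteps_ofSteps (y₀ : ℤ) (s : ℕ → ℤ) : chainSteps (ofSteps y₀ s) = s := by
  have : Function.update (ofSteps y₀ s) 0 0 = fun j => ∑ i ∈ range j, s i := by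
    funext j
    rcases eq_or_ne j 0 with rfl | hj <;> simp [ofSteps, *]
  funext i
  rw [chainSteps, this]
  simp [Finset.sum_range_succ]

theorem ofSteps_inj {y₀ y₀' : ℤ} {s s' : ℕ → ℤ} (h : ofSteps y₀ s = ofSteps y₀' s') :
    y₀ = y₀' ∧ s = s' :=
  ⟨by simpa [ofSteps] using congrFun h 0, by rw [← chainSteps_ofSteps y₀ s, h, chainSteps_ofSteps]⟩

end Steps

section QuadraticForm

theorem HM_succ_right {m i : ℕ} (hm : 3 ≤ m) (hi : i ≤ m) :
    HM i (m + 1) = if i = m then 1 else 0 := by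
  unfold HM HAdj
  grind

theorem HM_succ_left {m j : ℕ} (hm : 3 ≤ m) (hj : j ≤ m) :
    HM (m + 1) j = if j = m then 1 else 0 := by
  unfold HM HAdj
  grind

theorem HQ_succ {m : ℕ} (hm : 3 ≤ m) (Y : ℕ → ℤ) :
    HQ (m + 2) Y = HQ (m + 1) Y + 2 * Y m * Y (m + 1) - 2 * Y (m + 1) ^ 2 := by
  have hcol : ∑ i ∈ range (m + 1), Y i * HM i (m + 1) * Y (m + 1) = Y m * Y (m + 1) := by
    rw [Finset.sum_eq_single_of_mem m (by simp)]
    · simp [HM_succ_right hm le_rfl]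
    · intro i hi him
      simp [HM_succ_right hm (Nat.lt_succ_iff.mp (Finset.mem_range.mp hi)), him]
  have hrow : ∑ j ∈ range (m + 1), Y (m + 1) * HM (m + 1) j * Y j = Y (m + 1) * Y m := by
    rw [Finset.sum_eq_single_of_mem m (by simp)]
    · simp [HM_succ_left hm le_rfl]
    · intro j hj hjm
      simp [HM_succ_left hm (Nat.lt_succ_iff.mp (Finset.mem_range.mp hj)), hjm]
  have hdiag : HM (m + 1) (m + 1) = -2 := by simp [HM]
  simp only [HQ, Finset.sum_range_succ _ (m + 1), Finset.sum_add_distrib, hcol, hrow, hdiag]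
  ring

theorem HQ_succ_eq_sub_sum_sq {m : ℕ} (hm : 3 ≤ m) (Y : ℕ → ℤ) :
    HQ (m + 1) Y = 2 * Y 0 * Y 3 - 3 * Y 0 ^ 2 - ∑ i ∈ range m, chainSteps Y i ^ 2 - Y m ^ 2 := by
  induction m, hm using Nat.le_induction with
  | base =>
    simp [HQ, HM, HAdj, Finset.sum_range_succ, chainSteps]
    ring
  | succ m hm ih =>
    rw [HQ_succ hm, ih, Finset.sum_range_succ, chainSteps_of_ne_zero (by omega)]
    ring

theorem HQ_eq_sub_sum_sq {n : ℕ} (hn : 4 ≤ n) {Y : ℕ → ℤ} (hY : ∀ i, n ≤ i → Y i = 0) :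
    HQ n Y = 2 * Y 0 * Y 3 - 3 * Y 0 ^ 2 - ∑ i ∈ range n, chainSteps Y i ^ 2 := by
  obtain ⟨m, rfl⟩ : ∃ m, n = m + 1 := ⟨n - 1, by omega⟩
  rw [HQ_succ_eq_sub_sum_sq (by omega), Finset.sum_range_succ, chainSteps_of_ne_zero (by omega),
    hY (m + 1) le_rfl]
  ring

end QuadraticForm

def indicatorDiff (P N : Finset ℕ) (i : ℕ) : ℤ :=
  (if i ∈ P then 1 else 0) - (if i ∈ N then 1 else 0)

section IndicatorDiff

variable {P N : Finset ℕ}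

theorem sum_indicatorDiff (s : Finset ℕ) :
    ∑ i ∈ s, indicatorDiff P N i = (#(s ∩ P) : ℤ) - #(s ∩ N) := by
  simp [indicatorDiff, Finset.sum_sub_distrib]

theorem sum_indicatorDiff_sq (hPN : Disjoint P N) (s : Finset ℕ) :
    ∑ i ∈ s, indicatorDiff P N i ^ 2 = (#(s ∩ P) : ℤ) + #(s ∩ N) := by
  have hsq : ∀ i,
      indicatorDiff P N i ^ 2 = (if i ∈ P then 1 else 0) + (if i ∈ N then 1 else 0) := by
    intro i
    have : i ∈ P → i ∉ N := fun h => Finset.disjoint_left.mp hPN h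
    by_cases hP : i ∈ P <;> by_cases hN : i ∈ N <;> simp_all [indicatorDiff]
  simp [hsq, Finset.sum_add_distrib]

theorem indicatorDiff_eq_one_iff (hPN : Disjoint P N) {i : ℕ} :
    indicatorDiff P N i = 1 ↔ i ∈ P := by
  have : i ∈ P → i ∉ N := fun h => Finset.disjoint_left.mp hPN h
  by_cases hP : i ∈ P <;> by_cases hN : i ∈ N <;> simp_all [indicatorDiff]

theorem indicatorDiff_eq_neg_one_iff (hPN : Disjoint P N) {i : ℕ} :
    indicatorDiff P N i = -1 ↔ i ∈ N := by
  have : i ∈ P → i ∉ N := fun h => Finset.disjoint_left.mp hPN h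
  by_cases hP : i ∈ P <;> by_cases hN : i ∈ N <;> simp_all [indicatorDiff]

theorem indicatorDiff_inj {P' N' : Finset ℕ} (hPN : Disjoint P N) (hPN' : Disjoint P' N')
    (h : indicatorDiff P N = indicatorDiff P' N') : P = P' ∧ N = N' := by
  constructor <;> ext i
  · rw [← indicatorDiff_eq_one_iff hPN, ← indicatorDiff_eq_one_iff hPN', h]
  · rw [← indicatorDiff_eq_neg_one_iff hPN, ← indicatorDiff_eq_neg_one_iff hPN', h]

theorem eq_indicatorDiff {s : ℕ → ℤ} {I : Finset ℕ} (hs : ∀ i, |s i| ≤ 1) (hI : ∀ i ∉ I, s i = 0) :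
    s = indicatorDiff {i ∈ I | s i = 1} {i ∈ I | s i = -1} := by
  funext i
  have := abs_le.mp (hs i)
  by_cases hi : i ∈ I
  · rcases (by omega : s i = -1 ∨ s i = 0 ∨ s i = 1) with h | h | h <;> simp [indicatorDiff, hi, h]
  · simp [indicatorDiff, hi, hI i hi]

end IndicatorDiff

def rootOf (y₀ : ℤ) (P N : Finset ℕ) : ℕ → ℤ := ofSteps y₀ (indicatorDiff P N)

section RootOf

variable {n : ℕ} {y₀ : ℤ} {P N : Finset ℕ}

@[simp]
theorem rootOf_zero : rootOf y₀ P N 0 = y₀ := by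
  simp [rootOf, ofSteps]

theorem rootOf_of_ne_zero {j : ℕ} (hj : j ≠ 0) :
    rootOf y₀ P N j = (#(range j ∩ P) : ℤ) - #(range j ∩ N) := by
  simp [rootOf, ofSteps, hj, sum_indicatorDiff]

theorem rootOf_inj {y₀' : ℤ} {P' N' : Finset ℕ} (hPN : Disjoint P N) (hPN' : Disjoint P' N')
    (h : rootOf y₀ P N = rootOf y₀' P' N') : y₀ = y₀' ∧ P = P' ∧ N = N' :=
  let ⟨hy, hs⟩ := ofSteps_inj h
  ⟨hy, indicatorDiff_inj hPN hPN' hs⟩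

theorem rootOf_eq_zero_of_le (hn : n ≠ 0) (hP : P ⊆ range n) (hN : N ⊆ range n) (hc : #P = #N)
    {j : ℕ} (hj : n ≤ j) : rootOf y₀ P N j = 0 := by
  have hsub : range n ⊆ range j := Finset.range_subset_range.mpr hj
  rw [rootOf_of_ne_zero (by omega), Finset.inter_eq_right.mpr (hP.trans hsub),
    Finset.inter_eq_right.mpr (hN.trans hsub), hc, sub_self]

theorem HQ_rootOf (hn : 4 ≤ n) (hP : P ⊆ range n) (hN : N ⊆ range n) (hPN : Disjoint P N)
    (hc : #P = #N) :
    HQ n (rootOf y₀ P N) = 2 * y₀ * rootOf y₀ P N 3 - 3 * y₀ ^ 2 - (#P + #N) := by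
  rw [HQ_eq_sub_sum_sq hn fun j hj => rootOf_eq_zero_of_le (by omega) hP hN hc hj, rootOf,
    chainSteps_ofSteps, ← rootOf, sum_indicatorDiff_sq hPN, Finset.inter_eq_right.mpr hP,
    Finset.inter_eq_right.mpr hN, rootOf_zero]

theorem chainRoot_nonneg {u v : ℕ} (huv : u < v) : 0 ≤ rootOf 0 {u} {v} := by
  intro j
  rcases eq_or_ne j 0 with rfl | hj
  · simp
  · rw [Pi.zero_apply, rootOf_of_ne_zero hj]
    rcases lt_or_ge v j with hvj | hvj
    · simp [hvj, huv.trans hvj]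
    · simp [hvj.not_gt]

theorem chainRoot_mem_HRoots (hn : 4 ≤ n) {u v : ℕ} (huv : u < v) (hv : v < n) :
    rootOf 0 {u} {v} ∈ HRoots n := by
  have hPN : Disjoint ({u} : Finset ℕ) {v} := Finset.disjoint_singleton.mpr huv.ne
  have hsub : ∀ w, w < n → ({w} : Finset ℕ) ⊆ range n := fun w hw => by simpa using hw
  refine ⟨fun j hj => rootOf_eq_zero_of_le (by omega) (hsub u (by omega)) (hsub v hv) rfl hj,
    fun h => ?_, Or.inl (chainRoot_nonneg huv), Or.inl ?_⟩
  · have := congrFun h v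
    rw [rootOf_of_ne_zero (by omega)] at this
    simp [huv] at this
  · rw [HQ_rootOf hn (hsub u (by omega)) (hsub v hv) hPN rfl]
    simp

theorem range_inter_eq_empty_of_subset_Ico {N : Finset ℕ} (hN : N ⊆ Ico 3 n) {j : ℕ} (hj : j ≤ 3) :
    range j ∩ N = ∅ :=
  Finset.eq_empty_of_forall_notMem fun i hi => by
    rw [Finset.mem_inter, Finset.mem_range] at hi
    have := (Finset.mem_Ico.mp (hN hi.2)).1
    omega

theorem branchRoot_nonneg (hP : P ⊆ range 3) (hN : N ⊆ Ico 3 n) (hc : #P = #N) :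
    0 ≤ rootOf 1 P N := by
  intro j
  rcases eq_or_ne j 0 with rfl | hj
  · simp
  · rw [Pi.zero_apply, rootOf_of_ne_zero hj, sub_nonneg]
    rcases le_or_gt j 3 with hj3 | hj3
    · simp [range_inter_eq_empty_of_subset_Ico hN hj3]
    · rw [Finset.inter_eq_right.mpr (hP.trans (Finset.range_subset_range.mpr hj3.le)), hc]
      exact Nat.cast_le.mpr (Finset.card_le_card Finset.inter_subset_right)

theorem disjoint_of_subset_range_of_subset_Ico (hP : P ⊆ range 3) (hN : N ⊆ Ico 3 n) :
    Disjoint P N :=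
  Finset.disjoint_left.mpr fun i hiP hiN => by
    have := Finset.mem_range.mp (hP hiP)
    have := (Finset.mem_Ico.mp (hN hiN)).1
    omega

theorem branchRoot_mem_HRoots (hn : 4 ≤ n) (hP : P ⊆ range 3) (hN : N ⊆ Ico 3 n) (hc : #P = #N) :
    rootOf 1 P N ∈ HRoots n := by
  have hPn : P ⊆ range n := hP.trans (Finset.range_subset_range.mpr (by omega))
  have hNn : N ⊆ range n := fun i hi => Finset.mem_range.mpr (Finset.mem_Ico.mp (hN hi)).2
  refine ⟨fun j hj => rootOf_eq_zero_of_le (by omega) hPn hNn hc hj,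
    fun h => by simpa using congrFun h 0, Or.inl (branchRoot_nonneg hP hN hc), Or.inr ?_⟩
  rw [HQ_rootOf hn hPn hNn (disjoint_of_subset_range_of_subset_Ico hP hN) hc,
    rootOf_of_ne_zero (by norm_num), Finset.inter_eq_right.mpr hP,
    range_inter_eq_empty_of_subset_Ico hN le_rfl, hc]
  simp
  ring

end RootOf

theorem even_sq_sub_self (x : ℤ) : Even (x ^ 2 - x) := by
  simpa [sq, mul_sub] using Int.even_mul_pred_self x

theorem sq_sub_self_nonneg (x : ℤ) : 0 ≤ x ^ 2 - x := sub_nonneg.mpr (Int.le_self_sq x)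

theorem eq_zero_or_one_of_sum_sq_sub_self_le_one {s : Finset ℕ} {x : ℕ → ℤ}
    (h : ∑ i ∈ s, (x i ^ 2 - x i) ≤ 1) : ∀ i ∈ s, x i = 0 ∨ x i = 1 := by
  obtain ⟨k, hk⟩ : Even (∑ i ∈ s, (x i ^ 2 - x i)) :=
    Finset.even_sum (fun i => x i ^ 2 - x i) fun i _ => even_sq_sub_self (x i)
  have hnonneg : 0 ≤ ∑ i ∈ s, (x i ^ 2 - x i) :=
    Finset.sum_nonneg fun i _ => sq_sub_self_nonneg (x i)
  have hzero := (Finset.sum_eq_zero_iff_of_nonneg (s := s) fun i _ => sq_sub_self_nonneg (x i)).mp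
    (by omega)
  intro i hi
  have : x i * (x i - 1) = 0 := by linear_combination hzero i hi
  rcases mul_eq_zero.mp this with h | h
  · exact Or.inl h
  · exact Or.inr (by omega)

section Classification

variable {n : ℕ} {Y : ℕ → ℤ}

theorem chainSteps_eq_zero_of_le (hY : ∀ i, n ≤ i → Y i = 0) {i : ℕ} (hi : n ≤ i) :
    chainSteps Y i = 0 := by
  simp [chainSteps, Function.update_apply, hY i hi, hY (i + 1) (by omega)]

theorem sum_Ico_chainSteps (hn : 4 ≤ n) (hY : ∀ i, n ≤ i → Y i = 0) :
    ∑ i ∈ Ico 3 n, chainSteps Y i = -Y 3 := by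
  have := Finset.sum_range_add_sum_Ico (chainSteps Y) (by omega : 3 ≤ n)
  rw [sum_range_chainSteps Y (by omega), sum_range_chainSteps Y (by omega), hY n le_rfl] at this
  linarith

theorem HQ_eq_split_at_three (hn : 4 ≤ n) (hY : ∀ i, n ≤ i → Y i = 0) :
    HQ n Y = 2 * Y 0 * Y 3 - 3 * Y 0 ^ 2 - ∑ i ∈ range 3, chainSteps Y i ^ 2
      - ∑ i ∈ Ico 3 n, chainSteps Y i ^ 2 := by
  rw [HQ_eq_sub_sum_sq hn hY, ← Finset.sum_range_add_sum_Ico _ (by omega : 3 ≤ n)]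
  ring

theorem exists_eq_rootOf (hn : n ≠ 0) (hY : ∀ i, n ≤ i → Y i = 0)
    (hs : ∀ i, |chainSteps Y i| ≤ 1) :
    ∃ P N, P ⊆ range n ∧ N ⊆ range n ∧ Disjoint P N ∧ #P = #N ∧ Y = rootOf (Y 0) P N := by
  set P := {i ∈ range n | chainSteps Y i = 1}
  set N := {i ∈ range n | chainSteps Y i = -1}
  have hsteps : chainSteps Y = indicatorDiff P N :=
    eq_indicatorDiff hs fun i hi => chainSteps_eq_zero_of_le hY (by simpa using hi)
  have hP : P ⊆ range n := filter_subset _ _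
  have hN : N ⊆ range n := filter_subset _ _
  have hPN : Disjoint P N := Finset.disjoint_filter.mpr fun i _ h1 h2 => by omega
  have hsum := sum_indicatorDiff (P := P) (N := N) (range n)
  rw [← hsteps, sum_range_chainSteps Y hn, hY n le_rfl, Finset.inter_eq_right.mpr hP,
    Finset.inter_eq_right.mpr hN] at hsum
  refine ⟨P, N, hP, hN, hPN, by omega, ?_⟩
  rw [rootOf, ← hsteps, ofSteps_chainSteps]

theorem HRoots_zero_eq_zero_or_one (hn : 4 ≤ n) (hY : Y ∈ HRoots n) (hpos : 0 ≤ Y) :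
    Y 0 = 0 ∨ Y 0 = 1 := by
  obtain ⟨hsupp, -, -, hQ⟩ := hY
  have hL : Y 3 ^ 2 ≤ 3 * ∑ i ∈ range 3, chainSteps Y i ^ 2 := by
    rw [← sum_range_chainSteps Y (by norm_num : 3 ≠ 0)]
    simp only [Finset.sum_range_succ, Finset.sum_range_zero, zero_add]
    nlinarith [sq_nonneg (chainSteps Y 0 - chainSteps Y 1),
      sq_nonneg (chainSteps Y 1 - chainSteps Y 2), sq_nonneg (chainSteps Y 0 - chainSteps Y 2)]
  have hR : Y 3 ≤ ∑ i ∈ Ico 3 n, chainSteps Y i ^ 2 := by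
    rw [← neg_neg (Y 3), ← sum_Ico_chainSteps hn hsupp, ← Finset.sum_neg_distrib]
    exact Finset.sum_le_sum fun i _ => by nlinarith [Int.le_self_sq (-chainSteps Y i)]
  have hQ3 : -3 ≤ HQ n Y := by omega
  -- with these bounds `-3 ≤ HQ n Y` becomes `(Y₃ - 3 Y₀)² + 3 Y₃ ≤ 9`
  rw [HQ_eq_split_at_three hn hsupp] at hQ3
  have h0 := hpos 0
  have h3 := hpos 3
  simp only [Pi.zero_apply] at h0 h3
  have hbound : (Y 3 - 3 * Y 0) ^ 2 + 3 * Y 3 ≤ 9 := by nlinarith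
  have hY3 : Y 3 ≤ 3 := by nlinarith [sq_nonneg (Y 3 - 3 * Y 0)]
  have : Y 0 < 2 := by nlinarith [sq_nonneg (3 * Y 0 - Y 3 - 3)]
  omega

theorem eq_chainRoot_of_zero (hn : 4 ≤ n) (hY : Y ∈ HRoots n) (hpos : 0 ≤ Y) (h0 : Y 0 = 0) :
    ∃ u v, u < v ∧ v < n ∧ Y = rootOf 0 {u} {v} := by
  obtain ⟨hsupp, -, -, hQ⟩ := hY
  -- `∑ s² ≡ ∑ s = 0 (mod 2)` rules out `HQ n Y = -3`
  have hsq : ∑ i ∈ range n, chainSteps Y i ^ 2 = 2 := by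
    obtain ⟨k, hk⟩ : Even (∑ i ∈ range n, (chainSteps Y i ^ 2 - chainSteps Y i)) :=
      Finset.even_sum _ fun i _ => even_sq_sub_self _
    rw [Finset.sum_sub_distrib, sum_range_chainSteps Y (by omega), hsupp n le_rfl, sub_zero] at hk
    rw [HQ_eq_sub_sum_sq hn hsupp, h0] at hQ
    omega
  have hs : ∀ i, |chainSteps Y i| ≤ 1 := by
    intro i
    rcases lt_or_ge i n with hi | hi
    · have := Finset.single_le_sum (fun j _ => sq_nonneg (chainSteps Y j)) (Finset.mem_range.mpr hi)
      rw [hsq] at this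
      exact abs_le.mpr ⟨by nlinarith, by nlinarith⟩
    · simp [chainSteps_eq_zero_of_le hsupp hi]
  obtain ⟨P, N, hP, hN, hPN, hc, hYeq⟩ := exists_eq_rootOf (by omega) hsupp hs
  rw [hYeq, rootOf, chainSteps_ofSteps, sum_indicatorDiff_sq hPN, Finset.inter_eq_right.mpr hP,
    Finset.inter_eq_right.mpr hN] at hsq
  obtain ⟨u, rfl⟩ := Finset.card_eq_one.mp (by omega : #P = 1)
  obtain ⟨v, rfl⟩ := Finset.card_eq_one.mp (by omega : #N = 1)
  rw [h0] at hYeq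
  refine ⟨u, v, ?_, by simpa using hN, hYeq⟩
  by_contra! hvu
  have hvu' : v < u := lt_of_le_of_ne hvu (Finset.disjoint_singleton.mp hPN).symm
  have := hpos (v + 1)
  rw [hYeq, Pi.zero_apply, rootOf_of_ne_zero (by omega)] at this
  simp [hvu'.not_ge] at this

theorem eq_branchRoot_of_one (hn : 4 ≤ n) (hY : Y ∈ HRoots n) (h0 : Y 0 = 1) :
    ∃ P N, P ⊆ range 3 ∧ N ⊆ Ico 3 n ∧ #P = #N ∧ Y = rootOf 1 P N := by
  obtain ⟨hsupp, -, -, hQ⟩ := hY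
  have hQ' : HQ n Y = -3 - ∑ i ∈ range 3, (chainSteps Y i ^ 2 - chainSteps Y i)
      - ∑ i ∈ Ico 3 n, ((-chainSteps Y i) ^ 2 - -chainSteps Y i) := by
    simp only [neg_sq, sub_neg_eq_add, Finset.sum_sub_distrib, Finset.sum_add_distrib,
      HQ_eq_split_at_three hn hsupp, h0, sum_range_chainSteps Y (by norm_num : 3 ≠ 0),
      sum_Ico_chainSteps hn hsupp]
    ring
  have hL := Finset.sum_nonneg fun i (_ : i ∈ range 3) => sq_sub_self_nonneg (chainSteps Y i)
  have hR := Finset.sum_nonneg fun i (_ : i ∈ Ico 3 n) => sq_sub_self_nonneg (-chainSteps Y i)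
  have hleft := eq_zero_or_one_of_sum_sq_sub_self_le_one (s := range 3) (x := chainSteps Y)
    (by omega)
  have hright := eq_zero_or_one_of_sum_sq_sub_self_le_one (s := Ico 3 n)
    (x := fun i => -chainSteps Y i) (by omega)
  have hs : ∀ i, |chainSteps Y i| ≤ 1 := by
    intro i
    rw [abs_le]
    rcases lt_or_ge i 3 with hi3 | hi3
    · have := hleft i (Finset.mem_range.mpr hi3)
      omega
    rcases lt_or_ge i n with hin | hin
    · have := hright i (Finset.mem_Ico.mpr ⟨hi3, hin⟩)
      omega
    · simp [chainSteps_eq_zero_of_le hsupp hin]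
  obtain ⟨P, N, hP, hN, hPN, hc, hYeq⟩ := exists_eq_rootOf (by omega) hsupp hs
  have hsteps : chainSteps Y = indicatorDiff P N := by rw [hYeq, rootOf, chainSteps_ofSteps]
  refine ⟨P, N, fun i hi => ?_, fun i hi => ?_, hc, by rw [← h0]; exact hYeq⟩
  · have h1 : chainSteps Y i = 1 := by rw [hsteps, indicatorDiff_eq_one_iff hPN]; exact hi
    have hin := Finset.mem_range.mp (hP hi)
    by_contra hi3
    have := hright i (Finset.mem_Ico.mpr ⟨by simpa using hi3, hin⟩)
    simp [h1] at this
  · have h1 : chainSteps Y i = -1 := by rw [hsteps, indicatorDiff_eq_neg_one_iff hPN]; exact hi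
    have hin := Finset.mem_range.mp (hN hi)
    by_contra hi3
    have := hleft i (Finset.mem_range.mpr (by simp [Finset.mem_Ico] at hi3; omega))
    simp [h1] at this

theorem HRoots_cases_of_nonneg (hn : 4 ≤ n) (hY : Y ∈ HRoots n) (hpos : 0 ≤ Y) :
    (∃ u v, u < v ∧ v < n ∧ Y = rootOf 0 {u} {v}) ∨
      ∃ P N, P ⊆ range 3 ∧ N ⊆ Ico 3 n ∧ #P = #N ∧ Y = rootOf 1 P N :=
  (HRoots_zero_eq_zero_or_one hn hY hpos).imp (eq_chainRoot_of_zero hn hY hpos)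
    (eq_branchRoot_of_one hn hY)

end Classification

theorem HQ_neg (n : ℕ) (Y : ℕ → ℤ) : HQ n (-Y) = HQ n Y := by
  simp [HQ]

theorem neg_mem_HRoots {n : ℕ} {Y : ℕ → ℤ} (hY : Y ∈ HRoots n) : -Y ∈ HRoots n := by
  obtain ⟨hsupp, hne, hsign, hQ⟩ := hY
  refine ⟨fun i hi => by simp [hsupp i hi], neg_ne_zero.mpr hne, ?_, by rwa [HQ_neg]⟩
  rcases hsign with h | h
  · exact Or.inr fun i => by simpa using h i
  · exact Or.inl fun i => by simpa using h i

def effectiveRoots (n : ℕ) : Set (ℕ → ℤ) := {Y ∈ HRoots n | 0 ≤ Y}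

theorem HRoots_eq_union_neg (n : ℕ) : HRoots n = effectiveRoots n ∪ -effectiveRoots n := by
  ext Y
  refine ⟨fun hY => ?_, ?_⟩
  · rcases hY.2.2.1 with h | h
    · exact Or.inl ⟨hY, h⟩
    · exact Or.inr ⟨neg_mem_HRoots hY, fun i => by simpa using h i⟩
  · rintro (h | h)
    · exact h.1
    · simpa using neg_mem_HRoots h.1

theorem disjoint_effectiveRoots_neg (n : ℕ) : Disjoint (effectiveRoots n) (-effectiveRoots n) :=
  Set.disjoint_left.mpr fun Y hY hY' =>
    hY.1.2.1 (le_antisymm (fun i => by simpa using hY'.2 i) hY.2)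

theorem ncard_HRoots_eq_two_mul (n : ℕ) (h : (effectiveRoots n).Finite) :
    (HRoots n).ncard = 2 * (effectiveRoots n).ncard := by
  rw [HRoots_eq_union_neg, Set.ncard_union_eq (disjoint_effectiveRoots_neg n) h h.neg,
    Set.ncard_neg, two_mul]

open Classical in
noncomputable def chainRoots (n : ℕ) : Finset (ℕ → ℤ) :=
  ((range n).sigma range).image fun p => rootOf 0 {p.2} {p.1}

open Classical in
noncomputable def branchRoots (n : ℕ) : Finset (ℕ → ℤ) :=
  ((range 3).powerset.sigma fun P => (Ico 3 n).powersetCard #P).image fun p => rootOf 1 p.1 p.2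

theorem effectiveRoots_eq {n : ℕ} (hn : 4 ≤ n) :
    effectiveRoots n = ↑(chainRoots n) ∪ ↑(branchRoots n) := by
  ext Y
  simp only [effectiveRoots, chainRoots, branchRoots, Set.mem_ofPred_eq, Set.mem_union,
    Finset.coe_image, Set.mem_image, Finset.mem_coe, Finset.mem_sigma, Finset.mem_range,
    Finset.mem_powerset, Finset.mem_powersetCard, Sigma.exists]
  constructor
  · rintro ⟨hY, hpos⟩
    rcases HRoots_cases_of_nonneg hn hY hpos with ⟨u, v, huv, hv, rfl⟩ | ⟨P, N, hP, hN, hc, rfl⟩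
    · exact Or.inl ⟨v, u, ⟨hv, huv⟩, rfl⟩
    · exact Or.inr ⟨P, N, ⟨hP, hN, hc.symm⟩, rfl⟩
  · rintro (⟨v, u, ⟨hv, huv⟩, rfl⟩ | ⟨P, N, ⟨hP, hN, hc⟩, rfl⟩)
    · exact ⟨chainRoot_mem_HRoots hn huv hv, chainRoot_nonneg huv⟩
    · exact ⟨branchRoot_mem_HRoots hn hP hN hc.symm, branchRoot_nonneg hP hN hc.symm⟩

theorem card_chainRoots (n : ℕ) : #(chainRoots n) = n.choose 2 := by
  classical
  rw [chainRoots, Finset.card_image_of_injOn, Finset.card_sigma]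
  · simp [Finset.sum_range_id, Nat.choose_two_right]
  · rintro ⟨v, u⟩ hp ⟨v', u'⟩ hp' h
    simp only [Finset.coe_sigma, Set.mem_sigma_iff, Finset.mem_coe, Finset.mem_range] at hp hp'
    obtain ⟨-, hu, hv⟩ := rootOf_inj (Finset.disjoint_singleton.mpr hp.2.ne)
      (Finset.disjoint_singleton.mpr hp'.2.ne) h
    simp_all

theorem card_branchRoots {n : ℕ} (hn : 3 ≤ n) : #(branchRoots n) = n.choose 3 := by
  classical
  rw [branchRoots, Finset.card_image_of_injOn, Finset.card_sigma]
  · simp only [Finset.card_powersetCard, Nat.card_Ico]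
    rw [Finset.sum_powerset_apply_card (fun k => (n - 3).choose k), Finset.card_range]
    obtain ⟨m, rfl⟩ : ∃ m, n = 3 + m := ⟨n - 3, by omega⟩
    rw [Nat.add_choose_eq, Nat.add_sub_cancel_left]
    simp [Finset.sum_range_succ, Finset.Nat.antidiagonal_succ]
    ring
  · rintro ⟨P, N⟩ hp ⟨P', N'⟩ hp' h
    simp only [Finset.coe_sigma, Set.mem_sigma_iff, Finset.mem_coe, Finset.mem_powerset,
      Finset.mem_powersetCard] at hp hp'
    obtain ⟨-, rfl, rfl⟩ := rootOf_inj (disjoint_of_subset_range_of_subset_Ico hp.1 hp.2.1)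
      (disjoint_of_subset_range_of_subset_Ico hp'.1 hp'.2.1) h
    rfl

theorem disjoint_chainRoots_branchRoots (n : ℕ) :
    Disjoint (chainRoots n : Set (ℕ → ℤ)) (branchRoots n) := by
  refine Set.disjoint_left.mpr fun Y hA hB => ?_
  simp only [chainRoots, branchRoots, Finset.coe_image, Set.mem_image] at hA hB
  obtain ⟨p, -, rfl⟩ := hA
  obtain ⟨q, -, hq⟩ := hB
  simpa using congrFun hq 0

theorem two_mul_choose_three_succ (n : ℕ) : 2 * (n + 1).choose 3 = (n ^ 3 - n) / 3 := by
  rcases n with _ | m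
  · rfl
  show 2 * (m + 2).choose 3 = ((m + 1) ^ 3 - (m + 1)) / 3
  have h := Nat.descFactorial_eq_factorial_mul_choose (m + 2) 3
  simp only [Nat.descFactorial_succ, Nat.descFactorial_zero, Nat.factorial,
    show m + 2 - 2 = m by omega, show m + 2 - 1 = m + 1 by omega, Nat.sub_zero, mul_one] at h
  have hcube : (m + 1) ^ 3 - (m + 1) = m * ((m + 1) * (m + 2)) := Nat.sub_eq_of_eq_add (by ring)
  rw [hcube, h]
  omega

theorem stmt_11 (n : ℕ) (hn : 5 ≤ n) :
    (HRoots n).ncard = (n ^ 3 - n) / 3 := by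
  have hn4 : 4 ≤ n := by omega
  have hfin : (effectiveRoots n).Finite := by
    rw [effectiveRoots_eq hn4]
    exact (Finset.finite_toSet _).union (Finset.finite_toSet _)
  rw [ncard_HRoots_eq_two_mul n hfin, effectiveRoots_eq hn4,
    Set.ncard_union_eq (disjoint_chainRoots_branchRoots n), Set.ncard_coe_finset,
    Set.ncard_coe_finset, card_chainRoots, card_branchRoots (by omega), ← Nat.choose_succ_succ',
    two_mul_choose_three_succ]
end
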